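/- arXiv:1002.1055 — 8 statements merged into one kernel-verified Lean document; each statement's English description precedes it below -/
import Mathlib

section
/- Let a1, a4 be real with a1 ≠ 0. On the open region U = {(x,y) in R^2 : 1 + a1*x > 0}, the function γ(x,y) = (1+a1*x)^(-(a1+2*a4)/a1) is an integrating factor of the reversible system Q3^R given by dx/dt = y*(1+a1*x), dy/dt = -x + x^2 + a4*y^2; that is, ∂/∂x [γ(x,y)*y*(1+a1*x)] + ∂/∂y [γ(x,y)*(-x + x^2 + a4*y^2)] = 0 for all (x,y) in U. -/
/-! With `u = 1 + a1*x` and `p = -(a1 + 2*a4)/a1`, the first flux is `γ P = y u^(p+1)`, whose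
`x`-derivative `(p+1) a1 y u^p = -2 a4 y u^p` cancels `γ ∂Q/∂y = 2 a4 y u^p`. -/

theorem HasDerivAt.rpow_const_mul_self {f : ℝ → ℝ} {f' x : ℝ} (p : ℝ)
    (hf : HasDerivAt f f' x) (hx : f x ≠ 0) :
    HasDerivAt (fun x => f x ^ p * f x) ((p + 1) * f' * f x ^ p) x := by
  refine ((hf.rpow_const (p := p) (Or.inl hx)).mul hf).congr_deriv ?_
  rw [Real.rpow_sub_one hx]
  field_simp

/-- On U = {1 + a1*x > 0}, γ(x,y) = (1+a1*x)^(-(a1+2a4)/a1) is an integrating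
factor of the reversible system Q3^R: dx/dt = y*(1+a1*x),
dy/dt = -x + x^2 + a4*y^2. -/
theorem stmt_1 (a1 a4 : ℝ) (ha1 : a1 ≠ 0)
    (γ : ℝ → ℝ) (hγ : ∀ x : ℝ, γ x = (1 + a1*x) ^ (-(a1 + 2*a4)/a1)) :
    ∀ x y : ℝ, 1 + a1*x > 0 →
      deriv (fun x' => γ x' * (y * (1 + a1*x'))) x
        + deriv (fun y' => γ x * (-x + x^2 + a4*y'^2)) y = 0 := by
  intro x y hx
  set p := -(a1 + 2*a4)/a1
  have hu : HasDerivAt (fun x' => 1 + a1*x') a1 x := by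
    simpa using ((hasDerivAt_id x).const_mul a1).const_add 1
  have hdx : HasDerivAt (fun x' => γ x' * (y * (1 + a1*x')))
      (y * ((p + 1) * a1 * (1 + a1*x) ^ p)) x := by
    simp_rw [hγ, mul_left_comm _ y]
    exact (hu.rpow_const_mul_self p hx.ne').const_mul y
  have hdy : HasDerivAt (fun y' => γ x * (-x + x^2 + a4*y'^2)) (γ x * (a4 * (2*y))) y := by
    simpa using (((hasDerivAt_pow 2 y).const_mul a4).const_add (-x + x^2)).const_mul (γ x)
  have hp : (p + 1) * a1 = -(2*a4) := by
    simp only [p]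
    field_simp
    ring
  rw [hdx.deriv, hdy.deriv, hγ]
  linear_combination y * (1 + a1*x) ^ p * hp
end

section
/- Let a1, a4 be real with a1 ≠ 0, a4 ≠ 0, a1 ≠ a4, and a1 ≠ 2*a4. On the open region U = {(x,y) in R^2 : 1 + a1*x > 0}, the function F(x,y) = (1/2)*(1+a1*x)^(-2*a4/a1) * [ y^2 + (1+a1-a4)*(1+2*a4*x)/(a4*(a1-a4)*(a1-2*a4)) - x^2/(a1-a4) ] is a first integral of the reversible system Q3^R given by dx/dt = y*(1+a1*x), dy/dt = -x + x^2 + a4*y^2; that is, y*(1+a1*x)*∂F/∂x(x,y) + (-x + x^2 + a4*y^2)*∂F/∂y(x,y) = 0 for all (x,y) in U. -/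
/-!
Write `F = ½ u^p (y² + g(x))` with `u = 1 + a₁x`, `p = -2a₄/a₁` and `g = q3rPolyPart a₁ a₄`.
Since `p a₁ = -2a₄`, the derivative of `F` along the vector field is `½ y u^p` times
`-2a₄(y² + g) + u g' + 2(-x + x² + a₄y²)`: the `y²` terms cancel, and what remains vanishes
because `g` solves the linear equation `u g' = 2a₄ g + 2x - 2x²`.
-/

noncomputable def q3rPolyPart (a1 a4 x : ℝ) : ℝ :=
  (1 + a1 - a4) * (1 + 2*a4*x) / (a4*(a1 - a4)*(a1 - 2*a4)) - x^2 / (a1 - a4)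

noncomputable def q3rPolyPartDeriv (a1 a4 x : ℝ) : ℝ :=
  (1 + a1 - a4) * (2*a4) / (a4*(a1 - a4)*(a1 - 2*a4)) - 2*x / (a1 - a4)

lemma hasDerivAt_q3rPolyPart (a1 a4 x : ℝ) :
    HasDerivAt (q3rPolyPart a1 a4) (q3rPolyPartDeriv a1 a4 x) x := by
  have hlin : HasDerivAt (fun t : ℝ => (1 + a1 - a4) * (1 + 2*a4*t))
      ((1 + a1 - a4) * (2*a4)) x := by
    simpa using (((hasDerivAt_id x).const_mul (2*a4)).const_add 1).const_mul (1 + a1 - a4)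
  have hsq : HasDerivAt (fun t : ℝ => t^2) (2*x) x := by
    simpa using hasDerivAt_pow 2 x
  exact (hlin.div_const _).sub (hsq.div_const _)

lemma q3rPolyPart_ode {a1 a4 : ℝ} (ha4 : a4 ≠ 0) (h14 : a1 ≠ a4) (h124 : a1 ≠ 2*a4) (x : ℝ) :
    (1 + a1*x) * q3rPolyPartDeriv a1 a4 x
      = 2*a4 * q3rPolyPart a1 a4 x + 2*x - 2*x^2 := by
  have ha : a1 - a4 ≠ 0 := sub_ne_zero.mpr h14
  have hb : a1 - a4*2 ≠ 0 := by rw [mul_comm]; exact sub_ne_zero.mpr h124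
  unfold q3rPolyPart q3rPolyPartDeriv
  field_simp
  ring

lemma HasDerivAt.rpow_const_mul {u h : ℝ → ℝ} {u' h' p x : ℝ} (hu : HasDerivAt u u' x)
    (hh : HasDerivAt h h' x) (hx : 0 < u x) :
    HasDerivAt (fun t => u t ^ p * h t) (u x ^ (p - 1) * (p * u' * h x + u x * h')) x := by
  have hsplit : u x ^ p = u x ^ (p - 1) * u x := by
    simpa using Real.rpow_add_one hx.ne' (p - 1)
  refine ((hu.rpow_const (p := p) (Or.inl hx.ne')).mul hh).congr_deriv ?_
  rw [hsplit]
  ring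

/-- On U = {1 + a1*x > 0}, the function F is a first integral of the
reversible system Q3^R: dx/dt = y*(1+a1*x), dy/dt = -x + x^2 + a4*y^2. -/
theorem stmt_2 (a1 a4 : ℝ) (h1 : a1 ≠ 0) (h2 : a4 ≠ 0)
    (h3 : a1 ≠ a4) (h4 : a1 ≠ 2*a4)
    (F : ℝ → ℝ → ℝ)
    (hF : ∀ x y : ℝ, F x y = (1/2) * (1 + a1*x) ^ (-(2*a4)/a1) *
      (y^2 + (1 + a1 - a4)*(1 + 2*a4*x)/(a4*(a1 - a4)*(a1 - 2*a4))
        - x^2/(a1 - a4))) :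
    ∀ x y : ℝ, 1 + a1*x > 0 →
      y*(1 + a1*x) * deriv (fun x' => F x' y) x
        + (-x + x^2 + a4*y^2) * deriv (fun y' => F x y') y = 0 := by
  intro x y hx
  set p := -(2*a4)/a1
  have hF' : ∀ x y, F x y = 1/2 * ((1 + a1*x) ^ p * (y^2 + q3rPolyPart a1 a4 x)) := by
    intro x y
    rw [hF, q3rPolyPart]
    ring
  have hu : HasDerivAt (fun t : ℝ => 1 + a1*t) a1 x := by
    simpa using ((hasDerivAt_id x).const_mul a1).const_add 1
  have hFx : HasDerivAt (fun x' => F x' y) (1/2 * ((1 + a1*x) ^ (p - 1) *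
      (p * a1 * (y^2 + q3rPolyPart a1 a4 x) + (1 + a1*x) * q3rPolyPartDeriv a1 a4 x))) x := by
    simp only [hF']
    exact ((hu.rpow_const_mul ((hasDerivAt_q3rPolyPart a1 a4 x).const_add (y^2)) hx).const_mul _)
  have hFy : HasDerivAt (fun y' => F x y') (1/2 * ((1 + a1*x) ^ p * (2*y))) y := by
    simp only [hF']
    simpa using (((hasDerivAt_pow 2 y).add_const (q3rPolyPart a1 a4 x)).const_mul
      ((1 + a1*x) ^ p)).const_mul (1/2 : ℝ)
  have hpa : p * a1 = -(2*a4) := div_mul_cancel₀ _ h1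
  have hsplit : (1 + a1*x) ^ p = (1 + a1*x) ^ (p - 1) * (1 + a1*x) := by
    simpa using Real.rpow_add_one hx.ne' (p - 1)
  rw [hFx.deriv, hFy.deriv, hsplit, hpa, q3rPolyPart_ode h2 h3 h4]
  ring
end

section
/- Let a1, a3 be real, and define g(x,y) = (1+a1*x)*[(x-1)^2 + a3*(x-1)*y - (1+a1)*y^2]. On the open region U = {(x,y) in R^2 : g(x,y) ≠ 0}, the function γ(x,y) = 1/g(x,y) is an integrating factor of the Lotka–Volterra system Q3^LV given by dx/dt = y*(1+a1*x), dy/dt = -x + x^2 + a3*x*y - y^2; that is, ∂/∂x [y*(1+a1*x)/g(x,y)] + ∂/∂y [(-x + x^2 + a3*x*y - y^2)/g(x,y)] = 0 for all (x,y) in U. -/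
/-!
A nonvanishing `V` is an inverse integrating factor of `(P, Q)` when
`P ∂ₓV + Q ∂ᵧV = (∂ₓP + ∂ᵧQ) V`; then `1 / V` is an integrating factor, since by the quotient
rule `∂ₓ(P / V) + ∂ᵧ(Q / V) = ((∂ₓP + ∂ᵧQ) V - (P ∂ₓV + Q ∂ᵧV)) / V²`. For the Lotka–Volterra
system, with `V = g`, this identity is a polynomial identity in `x, y, a1, a3`.
-/

theorem deriv_div_add_deriv_div_eq_zero_of_inverse_integrating_factor
    {P Q V : ℝ → ℝ → ℝ} {x y Px Qy Vx Vy : ℝ}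
    (hP : HasDerivAt (P · y) Px x) (hQ : HasDerivAt (Q x ·) Qy y)
    (hVx : HasDerivAt (V · y) Vx x) (hVy : HasDerivAt (V x ·) Vy y) (hV : V x y ≠ 0)
    (hinv : P x y * Vx + Q x y * Vy = (Px + Qy) * V x y) :
    deriv (fun x' => P x' y / V x' y) x + deriv (fun y' => Q x y' / V x y') y = 0 := by
  have hPV : HasDerivAt (fun x' => P x' y / V x' y) _ x := hP.div hVx hV
  have hQV : HasDerivAt (fun y' => Q x y' / V x y') _ y := hQ.div hVy hV
  rw [hPV.deriv, hQV.deriv]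
  field_simp
  linear_combination -hinv

section LotkaVolterra

variable (a1 a3 : ℝ)

theorem hasDerivAt_lotkaVolterra_factor_fst (x y : ℝ) :
    HasDerivAt (fun x' => (1 + a1*x') * ((x' - 1)^2 + a3*(x' - 1)*y - (1 + a1)*y^2))
      (a1 * ((x - 1)^2 + a3*(x - 1)*y - (1 + a1)*y^2) + (1 + a1*x) * (2*(x - 1) + a3*y)) x := by
  have hshift : HasDerivAt (fun x' : ℝ => x' - 1) 1 x := (hasDerivAt_id' x).sub_const 1
  have hconic : HasDerivAt (fun x' => (x' - 1)^2 + a3*(x' - 1)*y - (1 + a1)*y^2)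
      (2*(x - 1) + a3*y) x :=
    (((hshift.pow 2).add ((hshift.const_mul a3).mul_const y)).sub_const ((1 + a1)*y^2)).congr_deriv
      (by ring)
  exact ((((hasDerivAt_id' x).const_mul a1).const_add 1).mul hconic).congr_deriv (by ring)

theorem hasDerivAt_lotkaVolterra_factor_snd (x y : ℝ) :
    HasDerivAt (fun y' => (1 + a1*x) * ((x - 1)^2 + a3*(x - 1)*y' - (1 + a1)*y'^2))
      ((1 + a1*x) * (a3*(x - 1) - 2*(1 + a1)*y)) y :=
  (((((hasDerivAt_id' y).const_mul (a3*(x - 1))).const_add ((x - 1)^2)).sub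
    (((hasDerivAt_id' y).pow 2).const_mul (1 + a1))).const_mul (1 + a1*x)).congr_deriv (by ring)

end LotkaVolterra

/-- On U = {g ≠ 0}, γ = 1/g is an integrating factor of the Lotka–Volterra
system Q3^LV: dx/dt = y*(1+a1*x), dy/dt = -x + x^2 + a3*x*y - y^2, where
g(x,y) = (1+a1*x)*((x-1)^2 + a3*(x-1)*y - (1+a1)*y^2). -/
theorem stmt_3 (a1 a3 : ℝ)
    (g : ℝ → ℝ → ℝ)
    (hg : ∀ x y : ℝ, g x y =
      (1 + a1*x) * ((x - 1)^2 + a3*(x - 1)*y - (1 + a1)*y^2)) :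
    ∀ x y : ℝ, g x y ≠ 0 →
      deriv (fun x' => y*(1 + a1*x') / g x' y) x
        + deriv (fun y' => (-x + x^2 + a3*x*y' - y'^2) / g x y') y = 0 := by
  intro x y hne
  obtain rfl : g = fun x y => (1 + a1*x) * ((x - 1)^2 + a3*(x - 1)*y - (1 + a1)*y^2) :=
    funext₂ hg
  have hP : HasDerivAt (fun x' => y*(1 + a1*x')) (y*a1) x :=
    ((((hasDerivAt_id' x).const_mul a1).const_add 1).const_mul y).congr_deriv (by ring)
  have hQ : HasDerivAt (fun y' => -x + x^2 + a3*x*y' - y'^2) (a3*x - 2*y) y :=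
    ((((hasDerivAt_id' y).const_mul (a3*x)).const_add (-x + x^2)).sub
      ((hasDerivAt_id' y).pow 2)).congr_deriv (by ring)
  refine deriv_div_add_deriv_div_eq_zero_of_inverse_integrating_factor
    (P := fun x y => y*(1 + a1*x)) (Q := fun x y => -x + x^2 + a3*x*y - y^2)
    (V := fun x y => (1 + a1*x) * ((x - 1)^2 + a3*(x - 1)*y - (1 + a1)*y^2)) hP hQ
    (hasDerivAt_lotkaVolterra_factor_fst a1 a3 x y)
    (hasDerivAt_lotkaVolterra_factor_snd a1 a3 x y) hne ?_
  ring
end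

section
/- Let a1, a3 be real with a1 ≠ 0, a1 ≠ -1, and a3^2 + 4*(1+a1) < 0, and set D = -a3^2 - 4*(1+a1) > 0. On the open region U = {(x,y) in R^2 : 1 + a1*x > 0 and x ≠ 1}, the function F(x,y) = -(1/(2*a1*(1+a1))) * { 2*log(1+a1*x) + a1*log| (1+a1)*y^2 - a3*y*(x-1) - (x-1)^2 | - (2*a1*a3*(x-1)/(|x-1|*sqrt(D))) * arctan[ (a3*(x-1) - 2*(1+a1)*y) / (|x-1|*sqrt(D)) ] } is a first integral of the Lotka–Volterra system Q3^LV given by dx/dt = y*(1+a1*x), dy/dt = -x + x^2 + a3*x*y - y^2; that is, y*(1+a1*x)*∂F/∂x(x,y) + (-x + x^2 + a3*x*y - y^2)*∂F/∂y(x,y) = 0 for all (x,y) in U. (On U the quadratic (1+a1)*y^2 - a3*y*(x-1) - (x-1)^2 is nonzero, since a3^2+4*(1+a1)<0 makes it negative definite in (x-1, y).) -/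
/-!
Write `u = x - 1`, `c = 1 + a1` and `Q = c y² - a3 y u - u²`; the negative discriminant makes `Q < 0`
for `u ≠ 0`. Since `arctan` is odd, the factor `u / |u|` can be absorbed into the arctangent, so on
`x ≠ 1` the function `F` agrees with a smooth expression. The identity
`(u r)² + (a3 u - 2 c y)² = 4 c Q` (with `r = √D`) turns the partial derivatives of the arctangent
into `r y / (2Q)` and `-r u / (2Q)`, whence `∂F/∂x = -(1/c) (1/(1 + a1 x) - (a3 y + u)/Q)` and
`∂F/∂y = -y/Q`; the first-integral equation is then a polynomial identity.
-/

open Real Filter Topology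

lemma quadratic_neg_of_discrim_neg {c a u y : ℝ} (hdisc : a ^ 2 + 4 * c < 0) (hu : u ≠ 0) :
    c * y ^ 2 - a * y * u - u ^ 2 < 0 := by
  have hu2 : 0 < u ^ 2 := by positivity
  nlinarith [sq_nonneg (2 * c * y - a * u), mul_pos (neg_pos.mpr hdisc) hu2]

lemma div_abs_mul_arctan_div_abs_mul {u : ℝ} (hu : u ≠ 0) (t r : ℝ) :
    u / |u| * arctan (t / (|u| * r)) = arctan (t / (u * r)) := by
  rcases hu.lt_or_gt with hneg | hpos
  · rw [abs_of_neg hneg, neg_mul, div_neg, div_neg, div_self hu, arctan_neg]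
    ring
  · rw [abs_of_pos hpos, div_self hpos.ne', one_mul]

section ArctanTerm

variable {c a r u y : ℝ}

lemma discrim_neg_of_sq_eq (hr : r ^ 2 = -a ^ 2 - 4 * c) (hr0 : r ≠ 0) : a ^ 2 + 4 * c < 0 := by
  linarith [sq_pos_of_ne_zero hr0]

lemma one_add_sq_arctanArg (hr : r ^ 2 = -a ^ 2 - 4 * c) (hr0 : r ≠ 0) (hu : u ≠ 0) :
    1 + ((a * u - 2 * c * y) / (u * r)) ^ 2
      = 4 * c * (c * y ^ 2 - a * y * u - u ^ 2) / (u * r) ^ 2 := by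
  field_simp
  linear_combination u ^ 2 * hr

lemma hasDerivAt_arctanArg_fst (hr : r ^ 2 = -a ^ 2 - 4 * c) (hr0 : r ≠ 0) (hu : u ≠ 0) :
    HasDerivAt (fun u => arctan ((a * u - 2 * c * y) / (u * r)))
      (r * y / (2 * (c * y ^ 2 - a * y * u - u ^ 2))) u := by
  have hdisc := discrim_neg_of_sq_eq hr hr0
  have hQ := (quadratic_neg_of_discrim_neg (y := y) hdisc hu).ne
  have hc : c ≠ 0 := by nlinarith [sq_nonneg a]
  have hv : HasDerivAt (fun u => (a * u - 2 * c * y) / (u * r))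
      ((a * (u * r) - (a * u - 2 * c * y) * r) / (u * r) ^ 2) u := by
    have hnum : HasDerivAt (fun u => a * u - 2 * c * y) a u := by
      simpa using ((hasDerivAt_id u).const_mul a).sub_const (2 * c * y)
    have hden : HasDerivAt (fun u => u * r) r u := by
      simpa using (hasDerivAt_id u).mul_const r
    exact hnum.div hden (mul_ne_zero hu hr0)
  refine hv.arctan.congr_deriv ?_
  rw [one_add_sq_arctanArg hr hr0 hu]
  field_simp
  ring

lemma hasDerivAt_arctanArg_snd (hr : r ^ 2 = -a ^ 2 - 4 * c) (hr0 : r ≠ 0) (hu : u ≠ 0) :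
    HasDerivAt (fun y => arctan ((a * u - 2 * c * y) / (u * r)))
      (-(r * u) / (2 * (c * y ^ 2 - a * y * u - u ^ 2))) y := by
  have hdisc := discrim_neg_of_sq_eq hr hr0
  have hQ := (quadratic_neg_of_discrim_neg (y := y) hdisc hu).ne
  have hc : c ≠ 0 := by nlinarith [sq_nonneg a]
  have hv : HasDerivAt (fun y => (a * u - 2 * c * y) / (u * r)) (-(2 * c) / (u * r)) y := by
    simpa using (((hasDerivAt_id y).const_mul (2 * c)).const_sub (a * u)).div_const (u * r)
  refine hv.arctan.congr_deriv ?_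
  rw [one_add_sq_arctanArg hr hr0 hu]
  field_simp
  ring

end ArctanTerm

/-- The first integral `F` of the statement, with `log |·|` replaced by `log` and the factor
`(x - 1) / |x - 1|` absorbed into the arctangent; `r` stands for `√D`. -/
noncomputable def lvIntegral (a1 a3 r x y : ℝ) : ℝ :=
  -(1 / (2 * a1 * (1 + a1))) *
    (2 * log (1 + a1 * x) + a1 * log ((1 + a1) * y ^ 2 - a3 * y * (x - 1) - (x - 1) ^ 2)
      - 2 * a1 * a3 / r * arctan ((a3 * (x - 1) - 2 * (1 + a1) * y) / ((x - 1) * r)))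

lemma lvIntegral_eq {a1 a3 r x : ℝ} (hx : x ≠ 1) (y : ℝ) :
    -(1 / (2 * a1 * (1 + a1))) *
      (2 * log (1 + a1 * x) + a1 * log |(1 + a1) * y ^ 2 - a3 * y * (x - 1) - (x - 1) ^ 2|
        - (2 * a1 * a3 * (x - 1) / (|x - 1| * r)) *
            arctan ((a3 * (x - 1) - 2 * (1 + a1) * y) / (|x - 1| * r)))
      = lvIntegral a1 a3 r x y := by
  rw [lvIntegral, log_abs, ← div_abs_mul_arctan_div_abs_mul (sub_ne_zero.mpr hx)]
  ring

lemma hasDerivAt_lvIntegral_fst {a1 a3 r x : ℝ} (ha1 : a1 ≠ 0)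
    (hr : r ^ 2 = -a3 ^ 2 - 4 * (1 + a1)) (hr0 : r ≠ 0) (hx : x ≠ 1) (hx0 : 1 + a1 * x ≠ 0)
    (y : ℝ) :
    HasDerivAt (fun x => lvIntegral a1 a3 r x y)
      (-(1 / (1 + a1)) * (1 / (1 + a1 * x)
        - (a3 * y + (x - 1)) / ((1 + a1) * y ^ 2 - a3 * y * (x - 1) - (x - 1) ^ 2))) x := by
  have hdisc := discrim_neg_of_sq_eq hr hr0
  have hu : x - 1 ≠ 0 := sub_ne_zero.mpr hx
  have hQ := (quadratic_neg_of_discrim_neg (y := y) hdisc hu).ne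
  have hc : 1 + a1 ≠ 0 := by nlinarith [sq_nonneg a3]
  have hlin : HasDerivAt (fun x => 1 + a1 * x) a1 x := by
    simpa using ((hasDerivAt_id x).const_mul a1).const_add 1
  have hsub : HasDerivAt (fun x => x - 1) 1 x := (hasDerivAt_id x).sub_const 1
  have hquad : HasDerivAt (fun x => (1 + a1) * y ^ 2 - a3 * y * (x - 1) - (x - 1) ^ 2)
      (-(a3 * y) - 2 * (x - 1)) x := by
    exact (((hsub.const_mul (a3 * y)).const_sub ((1 + a1) * y ^ 2)).sub (hsub.pow 2)).congr_deriv
      (by ring)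
  have harc := (hasDerivAt_arctanArg_fst (y := y) hr hr0 hu).comp_sub_const x 1
  refine (((hlin.log hx0).const_mul 2 |>.add ((hquad.log hQ).const_mul a1)).sub
    (harc.const_mul (2 * a1 * a3 / r)) |>.const_mul (-(1 / (2 * a1 * (1 + a1))))).congr_deriv ?_
  field_simp
  ring

lemma hasDerivAt_lvIntegral_snd {a1 a3 r x : ℝ} (ha1 : a1 ≠ 0)
    (hr : r ^ 2 = -a3 ^ 2 - 4 * (1 + a1)) (hr0 : r ≠ 0) (hx : x ≠ 1) (y : ℝ) :
    HasDerivAt (fun y => lvIntegral a1 a3 r x y)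
      (-y / ((1 + a1) * y ^ 2 - a3 * y * (x - 1) - (x - 1) ^ 2)) y := by
  have hdisc := discrim_neg_of_sq_eq hr hr0
  have hu : x - 1 ≠ 0 := sub_ne_zero.mpr hx
  have hQ := (quadratic_neg_of_discrim_neg (y := y) hdisc hu).ne
  have hc : 1 + a1 ≠ 0 := by nlinarith [sq_nonneg a3]
  have hquad : HasDerivAt (fun y => (1 + a1) * y ^ 2 - a3 * y * (x - 1) - (x - 1) ^ 2)
      (2 * (1 + a1) * y - a3 * (x - 1)) y := by
    exact (((((hasDerivAt_id' y).pow 2).const_mul (1 + a1)).sub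
      (((hasDerivAt_id' y).const_mul a3).mul_const (x - 1))).sub_const ((x - 1) ^ 2)).congr_deriv
      (by ring)
  have harc := hasDerivAt_arctanArg_snd (c := 1 + a1) (y := y) hr hr0 hu
  refine (((hasDerivAt_const y (2 * log (1 + a1 * x))).add ((hquad.log hQ).const_mul a1)).sub
    (harc.const_mul (2 * a1 * a3 / r)) |>.const_mul (-(1 / (2 * a1 * (1 + a1))))).congr_deriv ?_
  field_simp
  ring

theorem stmt_4_general (a1 a3 : ℝ) (h0 : a1 ≠ 0)
    (hneg : a3^2 + 4*(1 + a1) < 0)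
    (D : ℝ) (hD : D = -a3^2 - 4*(1 + a1))
    (F : ℝ → ℝ → ℝ)
    (hF : ∀ x y : ℝ, F x y = -(1/(2*a1*(1 + a1))) *
      (2 * Real.log (1 + a1*x)
        + a1 * Real.log |(1 + a1)*y^2 - a3*y*(x - 1) - (x - 1)^2|
        - (2*a1*a3*(x - 1)/(|x - 1| * Real.sqrt D)) *
            Real.arctan ((a3*(x - 1) - 2*(1 + a1)*y)/(|x - 1| * Real.sqrt D)))) :
    0 < D ∧
    ∀ x y : ℝ, 1 + a1*x > 0 → x ≠ 1 →
      y*(1 + a1*x) * deriv (fun x' => F x' y) x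
        + (-x + x^2 + a3*x*y - y^2) * deriv (fun y' => F x y') y = 0 := by
  have hDpos : 0 < D := by linarith
  refine ⟨hDpos, fun x y hx hx1 => ?_⟩
  have hr : √D ^ 2 = -a3 ^ 2 - 4 * (1 + a1) := by rw [sq_sqrt hDpos.le, hD]
  have hr0 : √D ≠ 0 := (sqrt_pos.mpr hDpos).ne'
  have hFx : (fun x' => F x' y) =ᶠ[𝓝 x] fun x' => lvIntegral a1 a3 √D x' y := by
    filter_upwards [eventually_ne_nhds hx1] with x' hx'
    rw [hF, lvIntegral_eq hx']
  have hFy : (fun y' => F x y') = fun y' => lvIntegral a1 a3 √D x y' := by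
    funext y'
    rw [hF, lvIntegral_eq hx1]
  rw [hFx.deriv_eq, hFy, (hasDerivAt_lvIntegral_fst h0 hr hr0 hx1 hx.ne' y).deriv,
    (hasDerivAt_lvIntegral_snd h0 hr hr0 hx1 y).deriv]
  have hQ := (quadratic_neg_of_discrim_neg (y := y) hneg (sub_ne_zero.mpr hx1)).ne
  have hc : 1 + a1 ≠ 0 := by nlinarith [sq_nonneg a3]
  set Q := (1 + a1) * y ^ 2 - a3 * y * (x - 1) - (x - 1) ^ 2 with hQdef
  field_simp
  rw [hQdef]
  ring

/-- First integral of the Lotka–Volterra system Q3^LV in the case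
a3^2 + 4*(1+a1) < 0, on the region {1 + a1*x > 0, x ≠ 1}. -/
theorem stmt_4 (a1 a3 : ℝ) (h0 : a1 ≠ 0) (h1 : a1 ≠ -1)
    (hneg : a3^2 + 4*(1 + a1) < 0)
    (D : ℝ) (hD : D = -a3^2 - 4*(1 + a1))
    (F : ℝ → ℝ → ℝ)
    (hF : ∀ x y : ℝ, F x y = -(1/(2*a1*(1 + a1))) *
      (2 * Real.log (1 + a1*x)
        + a1 * Real.log |(1 + a1)*y^2 - a3*y*(x - 1) - (x - 1)^2|
        - (2*a1*a3*(x - 1)/(|x - 1| * Real.sqrt D)) *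
            Real.arctan ((a3*(x - 1) - 2*(1 + a1)*y)/(|x - 1| * Real.sqrt D)))) :
    0 < D ∧
    ∀ x y : ℝ, 1 + a1*x > 0 → x ≠ 1 →
      y*(1 + a1*x) * deriv (fun x' => F x' y) x
        + (-x + x^2 + a3*x*y - y^2) * deriv (fun y' => F x y') y = 0 :=
  stmt_4_general a1 a3 h0 hneg D hD F hF
end

section
/- Let a2 be real, and define g(x,y) = 1 - 2*(1+2*a2^2)*x - 2*a2*y + (1+4*a2^2)*(x+a2*y)^2. On the open region U = {(x,y) in R^2 : g(x,y) > 0}, the function γ(x,y) = g(x,y)^(-5/2) is an integrating factor of the codimension-4 system Q4 given by dx/dt = y - (1+6*a2^2)*x*y + a2*y^2, dy/dt = -x + x^2 + 5*a2*x*y - 2*(1+a2^2)*y^2; that is, ∂/∂x [γ(x,y)*(y - (1+6*a2^2)*x*y + a2*y^2)] + ∂/∂y [γ(x,y)*(-x + x^2 + 5*a2*x*y - 2*(1+a2^2)*y^2)] = 0 for all (x,y) in U. -/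
/-!
Writing γ = g^r with r = -5/2, the divergence of γ·(P, Q) equals
g^(r-1)·(g·(∂ₓP + ∂ᵧQ) + r·(∂ₓg·P + ∂ᵧg·Q)), so it suffices that the polynomial
g·(∂ₓP + ∂ᵧQ) - (5/2)·(∂ₓg·P + ∂ᵧg·Q) vanishes identically, which is a ring identity.
-/

lemma hasDerivAt_of_forall_eq_quadratic {f : ℝ → ℝ} {a b c : ℝ}
    (hf : ∀ s, f s = a + b * s + c * s ^ 2) (t : ℝ) :
    HasDerivAt f (b + 2 * c * t) t := by
  rw [show f = fun s => a + b * s + c * s ^ 2 from funext hf]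
  refine ((((hasDerivAt_id t).const_mul b).const_add a).add
    (((hasDerivAt_id t).pow 2).const_mul c)).congr_deriv ?_
  simp only [id_eq]
  ring

lemma HasDerivAt.rpow_const_mul_s5 {f p : ℝ → ℝ} {f' p' r t : ℝ}
    (hf : HasDerivAt f f' t) (hp : HasDerivAt p p' t) (hft : f t ≠ 0) :
    HasDerivAt (fun s => f s ^ r * p s) (f t ^ (r - 1) * (f t * p' + r * f' * p t)) t := by
  refine ((hf.rpow_const (p := r) (Or.inl hft)).mul hp).congr_deriv ?_
  rw [Real.rpow_sub_one hft]
  field_simp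
  ring

/-- On U = {g > 0}, γ = g^(-5/2) is an integrating factor of the
codimension-4 system Q4: dx/dt = y - (1+6a2^2)*x*y + a2*y^2,
dy/dt = -x + x^2 + 5a2*x*y - 2(1+a2^2)*y^2, where
g(x,y) = 1 - 2(1+2a2^2)x - 2a2*y + (1+4a2^2)(x+a2*y)^2. -/
theorem stmt_5 (a2 : ℝ)
    (g : ℝ → ℝ → ℝ)
    (hg : ∀ x y : ℝ, g x y =
      1 - 2*(1 + 2*a2^2)*x - 2*a2*y + (1 + 4*a2^2)*(x + a2*y)^2) :
    ∀ x y : ℝ, g x y > 0 →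
      deriv (fun x' => (g x' y) ^ (-(5:ℝ)/2) *
          (y - (1 + 6*a2^2)*x'*y + a2*y^2)) x
        + deriv (fun y' => (g x y') ^ (-(5:ℝ)/2) *
            (-x + x^2 + 5*a2*x*y' - 2*(1 + a2^2)*y'^2)) y = 0 := by
  intro x y hpos
  have hgx := hasDerivAt_of_forall_eq_quadratic (f := fun x' => g x' y)
    (a := 1 - 2*a2*y + (1 + 4*a2^2)*a2^2*y^2)
    (b := -2*(1 + 2*a2^2) + 2*(1 + 4*a2^2)*a2*y) (c := 1 + 4*a2^2)
    (fun s => by simp only [hg]; ring) x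
  have hgy := hasDerivAt_of_forall_eq_quadratic (f := fun y' => g x y')
    (a := 1 - 2*(1 + 2*a2^2)*x + (1 + 4*a2^2)*x^2)
    (b := -2*a2 + 2*(1 + 4*a2^2)*a2*x) (c := (1 + 4*a2^2)*a2^2)
    (fun s => by simp only [hg]; ring) y
  have hP := hasDerivAt_of_forall_eq_quadratic
    (f := fun x' => y - (1 + 6*a2^2)*x'*y + a2*y^2)
    (a := y + a2*y^2) (b := -(1 + 6*a2^2)*y) (c := 0) (fun s => by ring) x
  have hQ := hasDerivAt_of_forall_eq_quadratic
    (f := fun y' => -x + x^2 + 5*a2*x*y' - 2*(1 + a2^2)*y'^2)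
    (a := -x + x^2) (b := 5*a2*x) (c := -2*(1 + a2^2)) (fun s => by ring) y
  rw [(hgx.rpow_const_mul_s5 hP hpos.ne').deriv, (hgy.rpow_const_mul_s5 hQ hpos.ne').deriv,
    ← mul_add]
  refine mul_eq_zero_of_right _ ?_
  rw [hg]
  ring
end

section
/- Let a2 be real with a2 ≠ 0, and define g(x,y) = 1 - 2*(1+2*a2^2)*x - 2*a2*y + (1+4*a2^2)*(x+a2*y)^2 and f(x,y) = -(1+a2^2) + 3*(x + a2*y + 2*a2^2*x)*[1 + a2^2 - (1+3*a2^2)*(x + a2*y)] + (1+3*a2^2)*(1+4*a2^2)*(x + a2*y)^3. On the open region U = {(x,y) in R^2 : g(x,y) > 0}, the function F(x,y) = (1/(12*a2^6)) * g(x,y)^(-3/2) * f(x,y) is a first integral of the codimension-4 system Q4 given by dx/dt = y - (1+6*a2^2)*x*y + a2*y^2, dy/dt = -x + x^2 + 5*a2*x*y - 2*(1+a2^2)*y^2; that is, (y - (1+6*a2^2)*x*y + a2*y^2)*∂F/∂x(x,y) + (-x + x^2 + 5*a2*x*y - 2*(1+a2^2)*y^2)*∂F/∂y(x,y) = 0 for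 all (x,y) in U. -/
/-!
Both `g = 0` and `f = 0` are invariant algebraic curves of Q4: the vector field `X = (P, Q)`
satisfies `X g = K g` and `X f = (3/2) K f` with the linear cofactor `K = 2 a x - 2 (1 + 2 a²) y`.
Hence `X (g ^ p * f) = (p K + (3/2) K) g ^ p f`, which vanishes for `p = -3/2` (Darboux).
-/

open Real

theorem HasDerivAt.const_mul_rpow_mul {g f : ℝ → ℝ} {g' f' c p t : ℝ}
    (hg : HasDerivAt g g' t) (hf : HasDerivAt f f' t) (ht : g t ≠ 0) :
    HasDerivAt (fun s => c * g s ^ p * f s)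
      (c * g t ^ (p - 1) * (p * g' * f t + g t * f')) t := by
  refine (((hg.rpow_const (Or.inl ht)).const_mul c).mul hf).congr_deriv ?_
  rw [rpow_sub_one ht]
  field_simp

theorem darboux_first_integral_rpow_mul {g f : ℝ → ℝ → ℝ} {x y P Q K L p c : ℝ}
    (hgx : DifferentiableAt ℝ (fun x' => g x' y) x) (hgy : DifferentiableAt ℝ (g x) y)
    (hfx : DifferentiableAt ℝ (fun x' => f x' y) x) (hfy : DifferentiableAt ℝ (f x) y)
    (hg0 : g x y ≠ 0)
    (hg : P * deriv (fun x' => g x' y) x + Q * deriv (g x) y = K * g x y)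
    (hf : P * deriv (fun x' => f x' y) x + Q * deriv (f x) y = L * f x y)
    (hKL : p * K + L = 0) :
    P * deriv (fun x' => c * g x' y ^ p * f x' y) x
      + Q * deriv (fun y' => c * g x y' ^ p * f x y') y = 0 := by
  rw [(hgx.hasDerivAt.const_mul_rpow_mul hfx.hasDerivAt hg0).deriv,
    (hgy.hasDerivAt.const_mul_rpow_mul hfy.hasDerivAt hg0).deriv]
  linear_combination c * g x y ^ (p - 1) * (p * f x y * hg + g x y * hf + g x y * f x y * hKL)

namespace Q4

def P (a x y : ℝ) : ℝ := y - (1 + 6*a^2)*x*y + a*y^2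

def Q (a x y : ℝ) : ℝ := -x + x^2 + 5*a*x*y - 2*(1 + a^2)*y^2

def g (a x y : ℝ) : ℝ := 1 - 2*(1 + 2*a^2)*x - 2*a*y + (1 + 4*a^2)*(x + a*y)^2

def f (a x y : ℝ) : ℝ :=
  -(1 + a^2) + 3*(x + a*y + 2*a^2*x) * (1 + a^2 - (1 + 3*a^2)*(x + a*y))
    + (1 + 3*a^2)*(1 + 4*a^2)*(x + a*y)^3

variable (a x y : ℝ)

theorem hasDerivAt_g_fst :
    HasDerivAt (fun x' => g a x' y) (2*(1 + 4*a^2)*(x + a*y) - 2*(1 + 2*a^2)) x := by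
  have hu : HasDerivAt (fun x' => x' + a*y) 1 x := (hasDerivAt_id' x).add_const _
  exact ((((hasDerivAt_id' x).const_mul _).const_sub 1).sub_const _).add
    ((hu.pow 2).const_mul _) |>.congr_deriv (by ring)

theorem hasDerivAt_g_snd :
    HasDerivAt (g a x) (2*a*(1 + 4*a^2)*(x + a*y) - 2*a) y := by
  have hu : HasDerivAt (fun y' => x + a*y') a y :=
    ((hasDerivAt_id' y).const_mul a).const_add x |>.congr_deriv (mul_one a)
  exact (((hasDerivAt_id' y).const_mul _).const_sub _).add
    ((hu.pow 2).const_mul _) |>.congr_deriv (by ring)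

theorem hasDerivAt_f_fst :
    HasDerivAt (fun x' => f a x' y)
      (3*(1 + 2*a^2)*(1 + a^2 - (1 + 3*a^2)*(x + a*y)) - 3*(1 + 3*a^2)*(x + a*y + 2*a^2*x)
        + 3*(1 + 3*a^2)*(1 + 4*a^2)*(x + a*y)^2) x := by
  have hu : HasDerivAt (fun x' => x' + a*y) 1 x := (hasDerivAt_id' x).add_const _
  exact (((hu.fun_add ((hasDerivAt_id' x).const_mul _)).const_mul 3).fun_mul
    ((hu.const_mul _).const_sub _)).const_add _ |>.add ((hu.pow 3).const_mul _)
    |>.congr_deriv (by ring)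

theorem hasDerivAt_f_snd :
    HasDerivAt (f a x)
      (3*a*(1 + a^2 - (1 + 3*a^2)*(x + a*y)) - 3*a*(1 + 3*a^2)*(x + a*y + 2*a^2*x)
        + 3*a*(1 + 3*a^2)*(1 + 4*a^2)*(x + a*y)^2) y := by
  have hu : HasDerivAt (fun y' => x + a*y') a y :=
    ((hasDerivAt_id' y).const_mul a).const_add x |>.congr_deriv (mul_one a)
  exact (((hu.add_const _).const_mul 3).mul ((hu.const_mul _).const_sub _)).const_add _
    |>.add ((hu.pow 3).const_mul _) |>.congr_deriv (by ring)

theorem lie_g :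
    P a x y * deriv (fun x' => g a x' y) x + Q a x y * deriv (g a x) y
      = (2*a*x - 2*(1 + 2*a^2)*y) * g a x y := by
  rw [(hasDerivAt_g_fst a x y).deriv, (hasDerivAt_g_snd a x y).deriv]
  unfold P Q g
  ring

theorem lie_f :
    P a x y * deriv (fun x' => f a x' y) x + Q a x y * deriv (f a x) y
      = (3*a*x - 3*(1 + 2*a^2)*y) * f a x y := by
  rw [(hasDerivAt_f_fst a x y).deriv, (hasDerivAt_f_snd a x y).deriv]
  unfold P Q f
  ring

end Q4

theorem stmt_6_general (a2 : ℝ)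
    (g f : ℝ → ℝ → ℝ)
    (hg : ∀ x y : ℝ, g x y =
      1 - 2*(1 + 2*a2^2)*x - 2*a2*y + (1 + 4*a2^2)*(x + a2*y)^2)
    (hf : ∀ x y : ℝ, f x y =
      -(1 + a2^2)
      + 3*(x + a2*y + 2*a2^2*x) * (1 + a2^2 - (1 + 3*a2^2)*(x + a2*y))
      + (1 + 3*a2^2)*(1 + 4*a2^2)*(x + a2*y)^3)
    (F : ℝ → ℝ → ℝ)
    (hF : ∀ x y : ℝ, F x y = (1/(12*a2^6)) * (g x y) ^ (-(3:ℝ)/2) * f x y) :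
    ∀ x y : ℝ, g x y > 0 →
      (y - (1 + 6*a2^2)*x*y + a2*y^2) * deriv (fun x' => F x' y) x
        + (-x + x^2 + 5*a2*x*y - 2*(1 + a2^2)*y^2) *
            deriv (fun y' => F x y') y = 0 := by
  obtain rfl : g = Q4.g a2 := funext₂ hg
  obtain rfl : f = Q4.f a2 := funext₂ hf
  obtain rfl : F = fun x y => 1/(12*a2^6) * Q4.g a2 x y ^ (-(3:ℝ)/2) * Q4.f a2 x y :=
    funext₂ hF
  intro x y hpos
  exact darboux_first_integral_rpow_mul
    (Q4.hasDerivAt_g_fst a2 x y).differentiableAt (Q4.hasDerivAt_g_snd a2 x y).differentiableAt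
    (Q4.hasDerivAt_f_fst a2 x y).differentiableAt (Q4.hasDerivAt_f_snd a2 x y).differentiableAt
    hpos.ne' (Q4.lie_g a2 x y) (Q4.lie_f a2 x y) (by ring)

/-- On U = {g > 0}, F = (1/(12 a2^6)) * g^(-3/2) * f is a first integral of
the codimension-4 system Q4. -/
theorem stmt_6 (a2 : ℝ) (ha2 : a2 ≠ 0)
    (g f : ℝ → ℝ → ℝ)
    (hg : ∀ x y : ℝ, g x y =
      1 - 2*(1 + 2*a2^2)*x - 2*a2*y + (1 + 4*a2^2)*(x + a2*y)^2)
    (hf : ∀ x y : ℝ, f x y =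
      -(1 + a2^2)
      + 3*(x + a2*y + 2*a2^2*x) * (1 + a2^2 - (1 + 3*a2^2)*(x + a2*y))
      + (1 + 3*a2^2)*(1 + 4*a2^2)*(x + a2*y)^3)
    (F : ℝ → ℝ → ℝ)
    (hF : ∀ x y : ℝ, F x y = (1/(12*a2^6)) * (g x y) ^ (-(3:ℝ)/2) * f x y) :
    ∀ x y : ℝ, g x y > 0 →
      (y - (1 + 6*a2^2)*x*y + a2*y^2) * deriv (fun x' => F x' y) x
        + (-x + x^2 + 5*a2*x*y - 2*(1 + a2^2)*y^2) *
            deriv (fun y' => F x y') y = 0 :=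
  stmt_6_general a2 g f hg hf F hF
end

section
/- Let a1, a4 be real with a1 ≠ 0, a4 ≠ 0, a1 ≠ a4, and a1 ≠ 2*a4, and set γ(x) = (1+a1*x)^(-(a1+2*a4)/a1). On the open region U = {(x,y) in R^2 : 1 + a1*x > 0}, the function H(x,y) = (1/2)*(1+a1*x)^(-2*a4/a1) * [ y^2 + (1+a1-a4)*(1+2*a4*x)/(a4*(a1-a4)*(a1-2*a4)) - x^2/(a1-a4) ] satisfies, for all (x,y) in U: ∂H/∂y(x,y) = γ(x)*y*(1+a1*x) and -∂H/∂x(x,y) = γ(x)*(-x + x^2 + a4*y^2). That is, H is a Hamiltonian for the time-rescaled reversible system dx/dτ = γ*(y + a1*x*y), dy/dτ = γ*(-x + x^2 + a4*y^2) on U. -/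
/-!
Write `t = 1 + a1 x` and `p = -2 a4 / a1`, so that `γ = t ^ (p - 1)` and `H = t ^ p B / 2` with
`B = y ^ 2 + c (1 + 2 a4 x) - d x ^ 2`. The `y`-derivative is `t ^ p y = γ t y` at once. For the
`x`-derivative, pulling out `t ^ (p - 1)` leaves `(a1 p B + t ∂ₓB) / 2 = -a4 B + t ∂ₓB / 2`, a polynomial
which equals `x - x ^ 2 - a4 y ^ 2` as soon as `d (a1 - a4) = 1` and `a4 (a1 - 2 a4) c = (1 + a1 - a4) d`;
these two relations are what fix the constants in `H`.
-/

open Real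

theorem HasDerivAt.rpow_const_mul_factor {g F : ℝ → ℝ} {g' F' p x : ℝ} (hg : HasDerivAt g g' x)
    (hgx : g x ≠ 0) (hF : HasDerivAt F F' x) :
    HasDerivAt (fun x => g x ^ p * F x) (g x ^ (p - 1) * (p * g' * F x + g x * F')) x := by
  refine ((hg.rpow_const (p := p) (Or.inl hgx)).mul hF).congr_deriv ?_
  rw [rpow_sub_one hgx]
  field_simp

theorem hasDerivAt_one_add_mul (a x : ℝ) : HasDerivAt (fun x' => 1 + a * x') a x := by
  simpa using ((hasDerivAt_id x).const_mul a).const_add 1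

def q3Bracket (a4 c d x y : ℝ) : ℝ := y ^ 2 + c * (1 + 2 * a4 * x) - x ^ 2 * d

theorem hasDerivAt_q3Bracket_fst (a4 c d x y : ℝ) :
    HasDerivAt (fun x' => q3Bracket a4 c d x' y) (c * (2 * a4) - 2 * x * d) x := by
  refine ((((hasDerivAt_one_add_mul (2 * a4) x).const_mul c).const_add (y ^ 2)).sub
    ((hasDerivAt_pow 2 x).mul_const d)).congr_deriv ?_
  norm_num

theorem hasDerivAt_q3Bracket_snd (a4 c d x y : ℝ) :
    HasDerivAt (fun y' => q3Bracket a4 c d x y') (2 * y) y := by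
  refine (((hasDerivAt_pow 2 y).add_const _).sub_const _).congr_deriv ?_
  norm_num

theorem q3Bracket_identity {a1 a4 c d : ℝ} (hc : a4 * (a1 - 2 * a4) * c = (1 + a1 - a4) * d)
    (hd : (a1 - a4) * d = 1) (x y : ℝ) :
    -a4 * q3Bracket a4 c d x y + (1 + a1 * x) * (c * (2 * a4) - 2 * x * d) / 2
      = x - x ^ 2 - a4 * y ^ 2 := by
  unfold q3Bracket
  linear_combination x * hc + (x - x ^ 2) * hd

theorem q3_constants_relation {a1 a4 : ℝ} (h2 : a4 ≠ 0) (h4 : a1 ≠ 2 * a4) :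
    a4 * (a1 - 2 * a4) * ((1 + a1 - a4) / (a4 * (a1 - a4) * (a1 - 2 * a4)))
      = (1 + a1 - a4) * (1 / (a1 - a4)) := by
  rw [mul_one_div, ← mul_div_mul_left (1 + a1 - a4) (a1 - a4)
    (mul_ne_zero h2 (sub_ne_zero.mpr h4))]
  ring

/-- On U = {1 + a1*x > 0}, H is a Hamiltonian of the time-rescaled
reversible system dx/dτ = γ*(y + a1*x*y), dy/dτ = γ*(-x + x^2 + a4*y^2),
where γ(x) = (1+a1*x)^(-(a1+2a4)/a1). -/
theorem stmt_13 (a1 a4 : ℝ) (h1 : a1 ≠ 0) (h2 : a4 ≠ 0)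
    (h3 : a1 ≠ a4) (h4 : a1 ≠ 2*a4)
    (γ : ℝ → ℝ) (hγ : ∀ x : ℝ, γ x = (1 + a1*x) ^ (-(a1 + 2*a4)/a1))
    (H : ℝ → ℝ → ℝ)
    (hH : ∀ x y : ℝ, H x y = (1/2) * (1 + a1*x) ^ (-(2*a4)/a1) *
      (y^2 + (1 + a1 - a4)*(1 + 2*a4*x)/(a4*(a1 - a4)*(a1 - 2*a4))
        - x^2/(a1 - a4))) :
    ∀ x y : ℝ, 1 + a1*x > 0 →
      HasDerivAt (fun y' => H x y') (γ x * (y * (1 + a1*x))) y ∧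
      HasDerivAt (fun x' => H x' y) (-(γ x * (-x + x^2 + a4*y^2))) x := by
  intro x y hx
  have ht : 1 + a1 * x ≠ 0 := hx.ne'
  have hc := q3_constants_relation h2 h4
  have hd : (a1 - a4) * (1 / (a1 - a4)) = 1 := mul_one_div_cancel (sub_ne_zero.mpr h3)
  set c := (1 + a1 - a4) / (a4 * (a1 - a4) * (a1 - 2 * a4))
  set d := 1 / (a1 - a4)
  set p := -(2 * a4) / a1
  have hγx : γ x = (1 + a1 * x) ^ p / (1 + a1 * x) := by
    rw [hγ, ← rpow_sub_one ht, div_sub_one h1]; congr 1; ring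
  have hHfun : H = fun x' y' => (1 / 2) * ((1 + a1 * x') ^ p * q3Bracket a4 c d x' y') := by
    funext x' y'; rw [hH, q3Bracket]; ring
  rw [hHfun, hγx]
  constructor
  · refine ((hasDerivAt_q3Bracket_snd a4 c d x y).const_mul _ |>.const_mul _).congr_deriv ?_
    field_simp
  · refine (((hasDerivAt_one_add_mul a1 x).rpow_const_mul_factor ht
      (hasDerivAt_q3Bracket_fst a4 c d x y)).const_mul _).congr_deriv ?_
    have hpa : p * a1 = -a4 * 2 := by rw [div_mul_cancel₀ _ h1]; ring
    rw [rpow_sub_one ht, hpa]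
    linear_combination (1 + a1 * x) ^ p / (1 + a1 * x) * q3Bracket_identity hc hd x y
end

section
/- Let a1, a4, a10 be real with a4 ≠ -1, and set b01 = -a10 and b11 = -((a1-1-a4)*(a1+2*a4)/(1+a4))*a10. Then (1-2*a4)*a10 + (1+a1)*(b01+b11) = -a1*(a1-a4)*(a1+2*a4)*a10/(1+a4). Consequently, if μ02 := (π/3)*a1*(a1-a4)*(a1+2*a4)*(a1-3*a4-5)*a10 ≠ 0, then (1-2*a4)*a10 + (1+a1)*(b01+b11) ≠ 0. (This shows that when two small limit cycles bifurcate from the center (0,0) with μ02 ≠ 0, the leading Melnikov coefficient μ10 at the center (1,0), which is a nonzero multiple of (1-2*a4)*a10 + (1+a1)*(b01+b11), is also nonzero, ruling out a (2,1)-distribution.) -/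
/-- Under μ00 = μ01 = 0, the bracket in the leading Melnikov coefficient μ10
at the center (1,0) equals -a1*(a1-a4)*(a1+2a4)*a10/(1+a4); hence if
μ02 = (π/3)*a1*(a1-a4)*(a1+2a4)*(a1-3a4-5)*a10 ≠ 0 then that bracket is
nonzero, ruling out a (2,1)-distribution. -/
theorem stmt_16 (a1 a4 a10 b01 b11 : ℝ) (ha4 : a4 ≠ -1)
    (hb01 : b01 = -a10)
    (hb11 : b11 = -((a1 - 1 - a4)*(a1 + 2*a4)/(1 + a4))*a10) :
    (1 - 2*a4)*a10 + (1 + a1)*(b01 + b11)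
      = -(a1*(a1 - a4)*(a1 + 2*a4)*a10)/(1 + a4)
    ∧ ((Real.pi/3)*a1*(a1 - a4)*(a1 + 2*a4)*(a1 - 3*a4 - 5)*a10 ≠ 0 →
        (1 - 2*a4)*a10 + (1 + a1)*(b01 + b11) ≠ 0) := by
  have h4 : (1 : ℝ) + a4 ≠ 0 := by
    intro h; apply ha4; linarith
  have heq : (1 - 2*a4)*a10 + (1 + a1)*(b01 + b11)
      = -(a1*(a1 - a4)*(a1 + 2*a4)*a10)/(1 + a4) := by
    subst hb01 hb11
    field_simp
    ring
  refine ⟨heq, fun hμ => ?_⟩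
  rw [heq]
  intro h
  apply hμ
  have h' : a1*(a1 - a4)*(a1 + 2*a4)*a10 = 0 := by
    rcases div_eq_zero_iff.mp h with h1 | h1
    · linarith
    · exact absurd h1 h4
  rcases mul_eq_zero.mp h' with h1 | h1
  · rcases mul_eq_zero.mp h1 with h2 | h2
    · rcases mul_eq_zero.mp h2 with h3 | h3 <;> simp [h3]
    · simp [h2]
  · simp [h1]
end
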